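/- Let Δ be a set of CMAEL(CD)-formulas with M,s ⊨ Δ for some CMAEM M and state s, and let ¬D_A φ ∈ Δ. Then there exists a state t of M such that (s,t) ∈ R^D_A and M,t ⊨ Γ, where Γ = {¬φ} ∪ {D_{A'}ψ ∈ Δ : A' ⊆ A} ∪ {¬D_{A'}ψ ∈ Δ : A' ⊆ A and ¬D_{A'}ψ ≠ ¬D_A φ} ∪ {¬C_{A'}ψ ∈ Δ : A' ∩ A ≠ ∅}. -/
import Mathlib


set_option autoImplicit false

/-- A coalition is a nonempty finite set of agents. -/
abbrev Coalition (Agent : Type) : Type := {A : Finset Agent // A.Nonempty}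

/-- Formulas of the logic CMAEL(CD). -/
inductive Formula (Agent AP : Type) : Type where
  | atom : AP → Formula Agent AP
  | neg  : Formula Agent AP → Formula Agent AP
  | conj : Formula Agent AP → Formula Agent AP → Formula Agent AP
  | D    : Coalition Agent → Formula Agent AP → Formula Agent AP
  | C    : Coalition Agent → Formula Agent AP → Formula Agent AP

/-- The singleton coalition `{a}`. -/
def single {Agent : Type} (a : Agent) : Coalition Agent :=
  ⟨{a}, Finset.singleton_nonempty a⟩

/-- A coalitional multiagent epistemic pseudo-model (pseudo-CMAEM):
each `RD A` is an equivalence relation, and `RD A ⊆ RD B` whenever `B ⊆ A`. -/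
structure PseudoCMAEM (Agent AP : Type) where
  State : Type
  nonempty : Nonempty State
  RD : Coalition Agent → State → State → Prop
  equiv : ∀ A, Equivalence (RD A)
  mono : ∀ (A B : Coalition Agent), B.1 ⊆ A.1 → ∀ s t, RD A s t → RD B s t
  label : State → Set AP

namespace PseudoCMAEM

variable {Agent AP : Type}

/-- `RC A` is the reflexive-transitive closure of `⋃_{∅ ≠ B ⊆ A} RD B`. -/
def RC (M : PseudoCMAEM Agent AP) (A : Coalition Agent) : M.State → M.State → Prop :=
  Relation.ReflTransGen (fun s t => ∃ B : Coalition Agent, B.1 ⊆ A.1 ∧ M.RD B s t)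

/-- Truth at a state (standard Kripke clauses). -/
def sat (M : PseudoCMAEM Agent AP) : M.State → Formula Agent AP → Prop
  | s, .atom p => p ∈ M.label s
  | s, .neg φ => ¬ sat M s φ
  | s, .conj φ ψ => sat M s φ ∧ sat M s ψ
  | s, .D A φ => ∀ t, M.RD A s t → sat M t φ
  | s, .C A φ => ∀ t, M.RC A s t → sat M t φ

/-- `t` is `A`-reachable from `s`: `s = t` or a finite chain of single-agent `RD` steps
with agents from `A`. -/
def AReach (M : PseudoCMAEM Agent AP) (A : Coalition Agent) : M.State → M.State → Prop :=
  Relation.ReflTransGen (fun s t => ∃ a ∈ A.1, M.RD (single a) s t)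

end PseudoCMAEM

/-- A coalitional multiagent epistemic model (CMAEM): additionally
`RD A = ⋂_{a ∈ A} RD {a}`. -/
structure CMAEM (Agent AP : Type) extends PseudoCMAEM Agent AP where
  inter : ∀ (A : Coalition Agent) (s t : State), RD A s t ↔ ∀ a ∈ A.1, RD (single a) s t

namespace CMAEM

variable {Agent AP : Type}

abbrev sat (M : CMAEM Agent AP) : M.State → Formula Agent AP → Prop :=
  M.toPseudoCMAEM.sat

abbrev RC (M : CMAEM Agent AP) : Coalition Agent → M.State → M.State → Prop :=
  M.toPseudoCMAEM.RC

end CMAEM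

/-- `AlphaComp χ ψ` : `ψ` is an α-component of the α-formula `χ`. -/
inductive AlphaComp {Agent AP : Type} : Formula Agent AP → Formula Agent AP → Prop where
  | negneg (φ : Formula Agent AP) : AlphaComp (.neg (.neg φ)) φ
  | conjL (φ ψ : Formula Agent AP) : AlphaComp (.conj φ ψ) φ
  | conjR (φ ψ : Formula Agent AP) : AlphaComp (.conj φ ψ) ψ
  | dSelf (A : Coalition Agent) (φ : Formula Agent AP) : AlphaComp (.D A φ) (.D A φ)
  | dComp (A : Coalition Agent) (φ : Formula Agent AP) : AlphaComp (.D A φ) φ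
  | cComp (A : Coalition Agent) (φ : Formula Agent AP) : AlphaComp (.C A φ) φ
  | cD (A : Coalition Agent) (φ : Formula Agent AP) {a : Agent} (ha : a ∈ A.1) :
      AlphaComp (.C A φ) (.D (single a) (.C A φ))

/-- α-formulas: `¬¬φ`, `φ∧ψ`, `D_A φ`, `C_A φ`. -/
def IsAlpha {Agent AP : Type} : Formula Agent AP → Prop
  | .neg (.neg _) => True
  | .conj _ _ => True
  | .D _ _ => True
  | .C _ _ => True
  | _ => False

/-- `BetaComp χ ψ` : `ψ` is a β-component of the β-formula `χ`. -/
inductive BetaComp {Agent AP : Type} : Formula Agent AP → Formula Agent AP → Prop where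
  | nconjL (φ ψ : Formula Agent AP) : BetaComp (.neg (.conj φ ψ)) (.neg φ)
  | nconjR (φ ψ : Formula Agent AP) : BetaComp (.neg (.conj φ ψ)) (.neg ψ)
  | ncComp (A : Coalition Agent) (φ : Formula Agent AP) : BetaComp (.neg (.C A φ)) (.neg φ)
  | ncD (A : Coalition Agent) (φ : Formula Agent AP) {a : Agent} (ha : a ∈ A.1) :
      BetaComp (.neg (.C A φ)) (.neg (.D (single a) (.C A φ)))

/-- β-formulas: `¬(φ∧ψ)`, `¬C_A φ`. -/
def IsBeta {Agent AP : Type} : Formula Agent AP → Prop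
  | .neg (.conj _ _) => True
  | .neg (.C _ _) => True
  | _ => False

section SetsOfFormulas

variable {Agent AP : Type}

/-- A set of formulas is patently inconsistent if it contains a pair `φ`, `¬φ`. -/
def PatInc (Δ : Set (Formula Agent AP)) : Prop := ∃ φ, φ ∈ Δ ∧ Formula.neg φ ∈ Δ

/-- Fully expanded set of formulas. -/
def FullyExpandedSet (Δ : Set (Formula Agent AP)) : Prop :=
  ¬ PatInc Δ ∧
  (∀ χ ∈ Δ, ∀ ψ, AlphaComp χ ψ → ψ ∈ Δ) ∧
  (∀ χ ∈ Δ, IsBeta χ → ∃ ψ, BetaComp χ ψ ∧ ψ ∈ Δ)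

/-- The subformulas of a formula. -/
def subf : Formula Agent AP → Set (Formula Agent AP)
  | .atom p => {Formula.atom p}
  | .neg φ => insert (Formula.neg φ) (subf φ)
  | .conj φ ψ => insert (Formula.conj φ ψ) (subf φ ∪ subf ψ)
  | .D A φ => insert (Formula.D A φ) (subf φ)
  | .C A φ => insert (Formula.C A φ) (subf φ)

end SetsOfFormulas

section Expansion

variable {Agent AP : Type}

/-- One set-replacement step of the procedure `FullExpansion`, acting on a family of sets
of formulas; patently inconsistent sets are discarded immediately. -/
inductive FEStep : Set (Set (Formula Agent AP)) → Set (Set (Formula Agent AP)) → Prop where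
  | alpha {F : Set (Set (Formula Agent AP))} {Φ : Set (Formula Agent AP)}
      {χ : Formula Agent AP} (hΦ : Φ ∈ F) (hχ : χ ∈ Φ) (hα : IsAlpha χ) :
      FEStep F ((F \ {Φ}) ∪ {Δ | Δ = Φ ∪ {ψ | AlphaComp χ ψ} ∧ ¬ PatInc Δ})
  | beta {F : Set (Set (Formula Agent AP))} {Φ : Set (Formula Agent AP)}
      {χ : Formula Agent AP} (hΦ : Φ ∈ F) (hχ : χ ∈ Φ) (hβ : IsBeta χ)
      (hnone : ∀ ψ, BetaComp χ ψ → ψ ∉ Φ) :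
      FEStep F ((F \ {Φ}) ∪ {Δ | (∃ ψ, BetaComp χ ψ ∧ Δ = insert ψ Φ) ∧ ¬ PatInc Δ})
  | ev {F : Set (Set (Formula Agent AP))} {Φ : Set (Formula Agent AP)}
      {A : Coalition Agent} {φ : Formula Agent AP}
      (hΦ : Φ ∈ F) (hχ : Formula.neg (.C A φ) ∈ Φ) (hnφ : Formula.neg φ ∉ Φ)
      (hother : ∃ ψ, BetaComp (Formula.neg (.C A φ)) ψ ∧ ψ ≠ Formula.neg φ ∧ ψ ∈ Φ) :
      FEStep F (F ∪ {Δ | Δ = insert (Formula.neg φ) Φ ∧ ¬ PatInc Δ})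

/-- The starting family of the expansion procedure: `{Γ}`, unless `Γ` is
patently inconsistent, in which case the empty family. -/
def feInit (Γ : Set (Formula Agent AP)) : Set (Set (Formula Agent AP)) :=
  {Δ | Δ = Γ ∧ ¬ PatInc Γ}

/-- Type of restrictive cut conditions: a condition on the cut formula, the host formula
it is a subformula of, and the current set. -/
abbrev CutCond (Agent AP : Type) : Type :=
  Formula Agent AP → Formula Agent AP → Set (Formula Agent AP) → Prop

/-- One step of the cut-saturated-expansion procedure: a `FEStep`, or a cut on a
subformula `D_A φ` (resp. `C_A φ`) of a member formula, when `C1` (resp. `C2`) holds. -/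
inductive CSEStep (C1 C2 : CutCond Agent AP) :
    Set (Set (Formula Agent AP)) → Set (Set (Formula Agent AP)) → Prop where
  | fe {F F' : Set (Set (Formula Agent AP))} : FEStep F F' → CSEStep C1 C2 F F'
  | cutD {F : Set (Set (Formula Agent AP))} {Φ : Set (Formula Agent AP)}
      {ψ : Formula Agent AP} {A : Coalition Agent} {φ : Formula Agent AP}
      (hΦ : Φ ∈ F) (hψ : ψ ∈ Φ) (hsub : Formula.D A φ ∈ subf ψ)
      (hc : C1 (Formula.D A φ) ψ Φ) :
      CSEStep C1 C2 F ((F \ {Φ}) ∪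
        {Δ | (Δ = insert (Formula.D A φ) Φ ∨ Δ = insert (Formula.neg (Formula.D A φ)) Φ) ∧
              ¬ PatInc Δ})
  | cutC {F : Set (Set (Formula Agent AP))} {Φ : Set (Formula Agent AP)}
      {ψ : Formula Agent AP} {A : Coalition Agent} {φ : Formula Agent AP}
      (hΦ : Φ ∈ F) (hψ : ψ ∈ Φ) (hsub : Formula.C A φ ∈ subf ψ)
      (hc : C2 (Formula.C A φ) ψ Φ) :
      CSEStep C1 C2 F ((F \ {Φ}) ∪
        {Δ | (Δ = insert (Formula.C A φ) Φ ∨ Δ = insert (Formula.neg (Formula.C A φ)) Φ) ∧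
              ¬ PatInc Δ})

/-- The cut-saturated expansions of `Γ`: members of a family reachable from `{Γ}` by
`CSEStep`s on which no `CSEStep` has any further effect (saturation). -/
def CSE (C1 C2 : CutCond Agent AP) (Γ : Set (Formula Agent AP)) :
    Set (Set (Formula Agent AP)) :=
  {Δ | ∃ F, Relation.ReflTransGen (CSEStep C1 C2) (feInit Γ) F ∧
        (∀ F', CSEStep C1 C2 F F' → F' = F) ∧ Δ ∈ F}

end Expansion

section Hintikka

variable {Agent AP : Type}

/-- The relation `R^C_A` determined by a family of relations `RD`. -/
def RCof {State : Type} (RD : Coalition Agent → State → State → Prop)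
    (A : Coalition Agent) : State → State → Prop :=
  Relation.ReflTransGen (fun s t => ∃ B : Coalition Agent, B.1 ⊆ A.1 ∧ RD B s t)

end Hintikka

/-- A coalitional multiagent epistemic Hintikka structure (CMAEHS). -/
structure CMAEHS (Agent AP : Type) where
  State : Type
  nonempty : Nonempty State
  RD : Coalition Agent → State → State → Prop
  H : State → Set (Formula Agent AP)
  ch1 : ∀ s, FullyExpandedSet (H s)
  ch2 : ∀ s (A : Coalition Agent) (φ : Formula Agent AP),
      Formula.neg (.D A φ) ∈ H s → ∃ t, RD A s t ∧ Formula.neg φ ∈ H t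
  ch3 : ∀ s s' (A : Coalition Agent), RD A s s' →
      ∀ (B : Coalition Agent), B.1 ⊆ A.1 →
      ∀ φ : Formula Agent AP, (Formula.D B φ ∈ H s ↔ Formula.D B φ ∈ H s')
  ch4 : ∀ s (A : Coalition Agent) (φ : Formula Agent AP),
      Formula.neg (.C A φ) ∈ H s → ∃ t, RCof RD A s t ∧ Formula.neg φ ∈ H t

section Tableau

variable {Agent AP : Type}

/-- The prestate created by rule `DR` from a state `Δ` and a formula `¬D_A φ ∈ Δ`. -/
def DRset (A : Coalition Agent) (φ : Formula Agent AP) (Δ : Set (Formula Agent AP)) :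
    Set (Formula Agent AP) :=
  ({Formula.neg φ} : Set (Formula Agent AP)) ∪
  {χ ∈ Δ | ∃ (A' : Coalition Agent) (ψ : Formula Agent AP),
      χ = Formula.D A' ψ ∧ A'.1 ⊆ A.1} ∪
  {χ ∈ Δ | ∃ (A' : Coalition Agent) (ψ : Formula Agent AP),
      χ = Formula.neg (Formula.D A' ψ) ∧ A'.1 ⊆ A.1 ∧
      χ ≠ Formula.neg (Formula.D A φ)} ∪
  {χ ∈ Δ | ∃ (A' : Coalition Agent) (ψ : Formula Agent AP),
      χ = Formula.neg (Formula.C A' ψ) ∧ ∃ a, a ∈ A'.1 ∧ a ∈ A.1}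

mutual
  /-- The prestates of the pretableau for input formula `θ`. -/
  inductive IsPrestate (C1 C2 : CutCond Agent AP) (θ : Formula Agent AP) :
      Set (Formula Agent AP) → Prop where
    | init : IsPrestate C1 C2 θ {θ}
    | dr {Δ : Set (Formula Agent AP)} {A : Coalition Agent} {φ : Formula Agent AP} :
        IsState C1 C2 θ Δ → Formula.neg (.D A φ) ∈ Δ →
        IsPrestate C1 C2 θ (DRset A φ Δ)

  /-- The states of the pretableau for input formula `θ` (rule `SR`). -/
  inductive IsState (C1 C2 : CutCond Agent AP) (θ : Formula Agent AP) :
      Set (Formula Agent AP) → Prop where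
    | sr {Γ Δ : Set (Formula Agent AP)} :
        IsPrestate C1 C2 θ Γ → Δ ∈ CSE C1 C2 Γ → IsState C1 C2 θ Δ
end

/-- The arrow `Δ →^{¬D_A φ} Δ'` of the initial tableau `T_0^θ`
(obtained from `Δ →^{¬D_A φ} Γ ⇢ Δ'` by prestate elimination). -/
def InitArrow (C1 C2 : CutCond Agent AP) (θ : Formula Agent AP)
    (Δ : Set (Formula Agent AP)) (A : Coalition Agent) (φ : Formula Agent AP)
    (Δ' : Set (Formula Agent AP)) : Prop :=
  IsState C1 C2 θ Δ ∧ Formula.neg (.D A φ) ∈ Δ ∧ Δ' ∈ CSE C1 C2 (DRset A φ Δ)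

/-- A path realizing the eventuality `¬C_A φ` at a state, within the set `S` of
(surviving) states, all of whose nodes satisfy the predicate `P`. -/
inductive RealizePath (C1 C2 : CutCond Agent AP) (θ : Formula Agent AP)
    (S : Set (Set (Formula Agent AP))) (P : Set (Formula Agent AP) → Prop)
    (A : Coalition Agent) (φ : Formula Agent AP) : Set (Formula Agent AP) → Prop where
  | base {Δ : Set (Formula Agent AP)} (hS : Δ ∈ S) (hP : P Δ)
      (h : Formula.neg φ ∈ Δ) : RealizePath C1 C2 θ S P A φ Δ
  | step {Δ Δ' : Set (Formula Agent AP)} (hS : Δ ∈ S) (hP : P Δ)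
      (hev : Formula.neg (.C A φ) ∈ Δ) {a : Agent} (ha : a ∈ A.1)
      {ψ : Formula Agent AP} (harr : InitArrow C1 C2 θ Δ (single a) ψ Δ')
      (h : RealizePath C1 C2 θ S P A φ Δ') : RealizePath C1 C2 θ S P A φ Δ

/-- One state-elimination step (rule `E1` or rule `E2`). -/
inductive ElimStep (C1 C2 : CutCond Agent AP) (θ : Formula Agent AP) :
    Set (Set (Formula Agent AP)) → Set (Set (Formula Agent AP)) → Prop where
  | e1 {S : Set (Set (Formula Agent AP))} {Δ : Set (Formula Agent AP)}
      {A : Coalition Agent} {φ : Formula Agent AP}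
      (hΔ : Δ ∈ S) (hin : Formula.neg (.D A φ) ∈ Δ)
      (hno : ∀ Δ' ∈ S, ¬ InitArrow C1 C2 θ Δ A φ Δ') :
      ElimStep C1 C2 θ S (S \ {Δ})
  | e2 {S : Set (Set (Formula Agent AP))} {Δ : Set (Formula Agent AP)}
      {A : Coalition Agent} {φ : Formula Agent AP}
      (hΔ : Δ ∈ S) (hin : Formula.neg (.C A φ) ∈ Δ)
      (hno : ¬ RealizePath C1 C2 θ S (fun _ => True) A φ Δ) :
      ElimStep C1 C2 θ S (S \ {Δ})

/-- `S` is the set of states of the final tableau `T^θ`: obtained from the states of the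
initial tableau `T_0^θ` by state-elimination steps, with no further step applicable. -/
def FinalTableau (C1 C2 : CutCond Agent AP) (θ : Formula Agent AP)
    (S : Set (Set (Formula Agent AP))) : Prop :=
  Relation.ReflTransGen (ElimStep C1 C2 θ) {Δ | IsState C1 C2 θ Δ} S ∧
  ∀ S', ¬ ElimStep C1 C2 θ S S'

/-- A set of formulas satisfiable (at a single state) in some CMAEM. -/
def SatSet (Δ : Set (Formula Agent AP)) : Prop :=
  ∃ (M : CMAEM Agent AP) (s : M.State), ∀ χ ∈ Δ, M.sat s χ

/-- The specific restrictive condition (C1) for cuts on `D_A φ`. -/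
def specC1 : CutCond Agent AP := fun χ ψ Δ =>
  ∃ (A : Coalition Agent) (φ : Formula Agent AP), χ = Formula.D A φ ∧
    ((∃ (B : Coalition Agent) (δ : Formula Agent AP),
        (ψ = Formula.D B δ ∨ ψ = Formula.neg (Formula.D B δ)) ∧
        ∃ (E : Coalition Agent) (ε : Formula Agent AP),
          Formula.neg (Formula.D E ε) ∈ Δ ∧ A.1 ⊆ E.1 ∧ B.1 ⊆ E.1) ∨
     (∃ (B : Coalition Agent) (δ : Formula Agent AP),
        ψ = Formula.neg (Formula.C B δ) ∧
        ∃ (E : Coalition Agent) (ε : Formula Agent AP),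
          Formula.neg (Formula.D E ε) ∈ Δ ∧ A.1 ⊆ E.1 ∧ ∃ a, a ∈ B.1 ∧ a ∈ E.1))

/-- The specific restrictive condition (C2) for cuts on `C_A φ`. -/
def specC2 : CutCond Agent AP := fun χ ψ Δ =>
  ∃ (A : Coalition Agent) (φ : Formula Agent AP), χ = Formula.C A φ ∧
    ((∃ (B : Coalition Agent) (δ : Formula Agent AP),
        (ψ = Formula.D B δ ∨ ψ = Formula.neg (Formula.D B δ)) ∧
        ∃ (E : Coalition Agent) (ε : Formula Agent AP),
          Formula.neg (Formula.D E ε) ∈ Δ ∧ B.1 ⊆ E.1 ∧ ∃ a, a ∈ A.1 ∧ a ∈ E.1) ∨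
     (∃ (B : Coalition Agent) (δ : Formula Agent AP),
        ψ = Formula.neg (Formula.C B δ) ∧
        ∃ (E : Coalition Agent) (ε : Formula Agent AP),
          Formula.neg (Formula.D E ε) ∈ Δ ∧ (∃ a, a ∈ A.1 ∧ a ∈ E.1) ∧
          ∃ a, a ∈ B.1 ∧ a ∈ E.1))

end Tableau

section Closure

variable {Agent AP : Type}

/-- The closure `cl(θ)`: smallest set containing `θ`, closed under α- and β-components,
and containing `¬ψ` whenever `¬D_A ψ` is in it. -/
inductive Closure (θ : Formula Agent AP) : Formula Agent AP → Prop where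
  | base : Closure θ θ
  | alpha {χ ψ : Formula Agent AP} : Closure θ χ → AlphaComp χ ψ → Closure θ ψ
  | beta {χ ψ : Formula Agent AP} : Closure θ χ → BetaComp χ ψ → Closure θ ψ
  | negD {A : Coalition Agent} {ψ : Formula Agent AP} :
      Closure θ (Formula.neg (.D A ψ)) → Closure θ (Formula.neg ψ)

/-- The extended closure `ecl(θ)`: smallest set containing `χ` and `¬χ`
for every `χ ∈ cl(θ)`. -/
def ecl (θ : Formula Agent AP) : Set (Formula Agent AP) :=
  {φ | ∃ χ, Closure θ χ ∧ (φ = χ ∨ φ = Formula.neg χ)}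

/-- The length of a formula. -/
def Formula.length : Formula Agent AP → ℕ
  | .atom _ => 1
  | .neg φ => φ.length + 1
  | .conj φ ψ => φ.length + ψ.length + 1
  | .D _ φ => φ.length + 1
  | .C _ φ => φ.length + 1

/-- The agents occurring in a formula. -/
def Formula.agents [DecidableEq Agent] : Formula Agent AP → Finset Agent
  | .atom _ => ∅
  | .neg φ => φ.agents
  | .conj φ ψ => φ.agents ∪ ψ.agents
  | .D A φ => A.1 ∪ φ.agents
  | .C A φ => A.1 ∪ φ.agents

end Closure

/-- The extended labeling `L⁺` of a CMAEM: `L⁺(s) = {φ | M,s ⊨ φ}`. -/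
def extLabel {Agent AP : Type} (M : CMAEM Agent AP) (s : M.State) :
    Set (Formula Agent AP) :=
  {φ | M.sat s φ}

/-- if `M,s ⊨ Δ` and `¬D_A φ ∈ Δ`, then there is `t` with
`(s,t) ∈ R^D_A` and `M,t ⊨ Γ`, where
`Γ = {¬φ} ∪ {D_{A'}ψ ∈ Δ : A' ⊆ A} ∪ {¬D_{A'}ψ ∈ Δ : A' ⊆ A, ¬D_{A'}ψ ≠ ¬D_A φ}
      ∪ {¬C_{A'}ψ ∈ Δ : A' ∩ A ≠ ∅}`. -/
theorem statement12 {Agent AP : Type} [Fintype Agent] [Countable AP]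
    (hcard : 1 < Fintype.card Agent)
    (M : CMAEM Agent AP) (s : M.State)
    (Δ : Set (Formula Agent AP)) (hΔ : ∀ χ ∈ Δ, M.sat s χ)
    (A : Coalition Agent) (φ : Formula Agent AP)
    (hin : Formula.neg (.D A φ) ∈ Δ) :
    ∃ t, M.RD A s t ∧ ∀ χ ∈ DRset A φ Δ, M.sat t χ := by
  have hnd := hΔ _ hin
  simp only [CMAEM.sat, PseudoCMAEM.sat] at hnd
  push_neg at hnd
  obtain ⟨t, hst, hnφ⟩ := hnd
  refine ⟨t, hst, ?_⟩
  intro χ hχ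
  rcases hχ with ((hχ | ⟨hmem, A', ψ, rfl, hsub⟩) | ⟨hmem, A', ψ, rfl, hsub, hne⟩) |
    ⟨hmem, A', ψ, rfl, a, haA', haA⟩
  · rcases hχ with rfl
    exact hnφ
  · intro u htu
    have hst' : M.RD A' s t := M.mono A A' hsub s t hst
    exact hΔ _ hmem u ((M.equiv A').trans hst' htu)
  · have hs := hΔ _ hmem
    intro h
    apply hs
    intro u hsu
    have hst' : M.RD A' s t := M.mono A A' hsub s t hst
    exact h u ((M.equiv A').trans ((M.equiv A').symm hst') hsu)
  · have hs := hΔ _ hmem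
    intro h
    apply hs
    intro u hsu
    apply h u
    have hts : M.RD (single a) t s :=
      (M.equiv (single a)).symm (M.mono A (single a)
        (Finset.singleton_subset_iff.mpr haA) s t hst)
    exact Relation.ReflTransGen.head ⟨single a, Finset.singleton_subset_iff.mpr haA', hts⟩ hsu
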